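/- There is an absolute constant c > 0 such that: for every prime p, every kernel K : F_p × F_p → ℂ with |K(x,y)| ≤ 1 for all x, y, and all f₁, f₂ : F_p → ℂ, one has ( Σ_{s ∈ F_p} | Σ_{n ∈ F_p, n ≠ 0} f̂₁(s − n) · f̂₂(n) · K(s − n, n) |² )^(1/2) ≤ c · Ω^(1/5) · ‖f₁‖₂ · ‖f₂‖₂, where Ω = ( Σ_{s,u,v ∈ F_p} | Σ_{x ∈ F_p} K(x, s − x) · conj(K(x + u, s − x)) · conj(K(x, s + v − x)) · K(x + u, s + v − x) |² )^(1/2). -/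

import Mathlib

/-!
Let `T = kernelConv K a b` with `a = f̂₁`, `b = f̂₂ · 1_{n ≠ 0}`, and `σ = Σₛ |T(s)|²`. Three
Cauchy–Schwarz steps, each after expanding a square so that `T` reappears:
`σ = Σ_y b(y) Φ(y)` with `Φ = kernelConvDual K a T`, so `σ² ≤ ‖b‖² ‖Φ‖²`; expanding `‖Φ‖²`
along shifts of `a` gives `‖Φ‖⁴ ≤ ‖a‖⁴ ‖W‖²` with `W = kernelCorr K T`; expanding `‖W‖²` along
shifts of `T` splits off the box sums of `K`, so
`‖W‖⁴ ≤ Ω² Σᵤ (Σₛ |T(s)|² |T(s+u)|²)² ≤ Ω² ‖a‖² ‖b‖² σ³` by the trivial bound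
`|T|² ≤ ‖a‖² ‖b‖²`. Hence `σ⁵ ≤ ‖a‖¹⁰ ‖b‖¹⁰ Ω²`, and Parseval turns `‖a‖, ‖b‖` into
`‖f₁‖₂, ‖f₂‖₂`, giving `c = 1`.
-/

open Finset

/-- `e_p(x) = exp(2πi x / p)` for `x : ZMod p`. -/
noncomputable def ep (p : ℕ) [NeZero p] (x : ZMod p) : ℂ :=
  Complex.exp (2 * (Real.pi : ℂ) * Complex.I * (x.val : ℂ) / (p : ℂ))

/-- Normalized L²-norm. -/
noncomputable def nrm2 (p : ℕ) [NeZero p] (f : ZMod p → ℂ) : ℝ :=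
  Real.sqrt ((1 / (p : ℝ)) * ∑ x : ZMod p, ‖f x‖ ^ 2)

/-- Fourier transform `f̂(z) = (1/p) Σ_x e_p(-xz) f(x)`. -/
noncomputable def ft (p : ℕ) [NeZero p] (f : ZMod p → ℂ) (z : ZMod p) : ℂ :=
  (1 / (p : ℂ)) * ∑ x : ZMod p, ep p (-(x * z)) * f x

/-- The quantity Ω associated to a kernel K. -/
noncomputable def bigOmega (p : ℕ) [NeZero p] (K : ZMod p → ZMod p → ℂ) : ℝ :=
  (∑ s : ZMod p, ∑ u : ZMod p, ∑ v : ZMod p,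
    ‖(∑ x : ZMod p,
      K x (s - x) * star (K (x + u) (s - x)) * star (K x (s + v - x)) *
        K (x + u) (s + v - x))‖ ^ 2) ^ ((1 : ℝ) / 2)

open ComplexConjugate

lemma ofReal_sum_sq_norm {ι : Type*} [Fintype ι] (f : ι → ℂ) :
    ((∑ i, ‖f i‖ ^ 2 : ℝ) : ℂ) = ∑ i, f i * conj (f i) := by
  push_cast
  simp only [Complex.mul_conj']

lemma sq_le_of_ofReal_eq_sum_mul {ι : Type*} [Fintype ι] {x : ℝ} (hx : 0 ≤ x) (f g : ι → ℂ)
    (h : (x : ℂ) = ∑ i, f i * g i) : x ^ 2 ≤ (∑ i, ‖f i‖ ^ 2) * ∑ i, ‖g i‖ ^ 2 := by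
  have hx' : x = ‖∑ i, f i * g i‖ := by rw [← h, Complex.norm_real, Real.norm_of_nonneg hx]
  calc x ^ 2 ≤ (∑ i, ‖f i‖ * ‖g i‖) ^ 2 := by
        rw [hx']
        gcongr
        exact (norm_sum_le _ _).trans_eq (by simp only [norm_mul])
    _ ≤ (∑ i, ‖f i‖ ^ 2) * ∑ i, ‖g i‖ ^ 2 := sum_mul_sq_le_sq_mul_sq _ _ _

section KernelConv

variable {G : Type*} [AddCommGroup G] [Fintype G]

lemma sum_mul_conj_sum_eq_sum_shift (F : G → ℂ) :
    (∑ x, F x) * conj (∑ x, F x) = ∑ x, ∑ u, F x * conj (F (x + u)) := by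
  rw [map_sum, sum_mul_sum]
  exact sum_congr rfl fun x _ =>
    (Fintype.sum_equiv (Equiv.addLeft x) _ _ fun _ => rfl).symm

lemma sum_box_eq_sum_sq_autocorr {R : Type*} [CommSemiring R] (w : G → R) :
    ∑ r : G × G × G, w r.1 * w (r.1 + r.2.1) * w (r.1 + r.2.2) * w (r.1 + r.2.1 + r.2.2) =
      ∑ u, (∑ s, w s * w (s + u)) ^ 2 := by
  simp only [Fintype.sum_prod_type]
  rw [sum_comm]
  refine sum_congr rfl fun u _ => ?_
  rw [sq, sum_mul_sum]
  refine sum_congr rfl fun s _ => ?_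
  refine Fintype.sum_equiv (Equiv.addLeft s) _ _ fun v => ?_
  simp only [Equiv.coe_addLeft, add_right_comm s u v]
  ring

lemma sum_sq_autocorr_le {w : G → ℝ} {M : ℝ} (hw : ∀ s, 0 ≤ w s) (hM : ∀ s, w s ≤ M) :
    ∑ u, (∑ s, w s * w (s + u)) ^ 2 ≤ M * (∑ s, w s) ^ 3 := by
  have hrow (u : G) : ∑ s, w s * w (s + u) ≤ M * ∑ s, w s := by
    rw [mul_sum]
    exact sum_le_sum fun s _ => by rw [mul_comm M]; exact mul_le_mul_of_nonneg_left (hM _) (hw s)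
  have htotal : ∑ u, ∑ s, w s * w (s + u) = (∑ s, w s) ^ 2 := by
    rw [sum_comm, sq, sum_mul]
    refine sum_congr rfl fun s _ => ?_
    rw [← mul_sum]
    exact congrArg _ (Fintype.sum_equiv (Equiv.addLeft s) _ _ fun _ => rfl)
  calc ∑ u, (∑ s, w s * w (s + u)) ^ 2
      ≤ ∑ u, (M * ∑ s, w s) * ∑ s, w s * w (s + u) := by
        refine sum_le_sum fun u _ => ?_
        rw [sq]
        exact mul_le_mul_of_nonneg_right (hrow u) (sum_nonneg fun s _ => mul_nonneg (hw _) (hw _))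
    _ = M * (∑ s, w s) ^ 3 := by rw [← mul_sum, htotal]; ring

noncomputable def kernelConv (K : G → G → ℂ) (a b : G → ℂ) (s : G) : ℂ :=
  ∑ x, a x * b (s - x) * K x (s - x)

noncomputable def kernelConvDual (K : G → G → ℂ) (a t : G → ℂ) (y : G) : ℂ :=
  ∑ x, a x * K x y * conj (t (x + y))

noncomputable def kernelCorr (K : G → G → ℂ) (t : G → ℂ) (x u : G) : ℂ :=
  ∑ s, K x (s - x) * conj (K (x + u) (s - x)) * conj (t s) * t (s + u)

noncomputable def kernelBox (K : G → G → ℂ) (s u v : G) : ℂ :=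
  ∑ x, K x (s - x) * star (K (x + u) (s - x)) * star (K x (s + v - x)) * K (x + u) (s + v - x)

noncomputable def kernelBoxEnergy (K : G → G → ℂ) : ℝ :=
  ∑ s, ∑ u, ∑ v, ‖kernelBox K s u v‖ ^ 2

variable (K : G → G → ℂ)

lemma sum_kernelConv_mul_conj (a b t : G → ℂ) :
    ∑ s, kernelConv K a b s * conj (t s) = ∑ y, b y * kernelConvDual K a t y := by
  simp only [kernelConv, kernelConvDual, sum_mul, mul_sum]
  rw [sum_comm]
  conv_rhs => rw [sum_comm]
  refine sum_congr rfl fun x _ => Fintype.sum_equiv (Equiv.subRight x) _ _ fun s => ?_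
  simp only [Equiv.subRight_apply, add_sub_cancel]
  ring

lemma sum_kernelConvDual_mul_conj (a t : G → ℂ) :
    ∑ y, kernelConvDual K a t y * conj (kernelConvDual K a t y) =
      ∑ q : G × G, a q.1 * conj (a (q.1 + q.2)) * kernelCorr K t q.1 q.2 := by
  simp only [kernelConvDual, sum_mul_conj_sum_eq_sum_shift, Fintype.sum_prod_type]
  rw [sum_comm]
  refine sum_congr rfl fun x _ => ?_
  rw [sum_comm]
  refine sum_congr rfl fun u _ => ?_
  rw [kernelCorr, mul_sum]
  refine (Fintype.sum_equiv (Equiv.subRight x) _ _ fun s => ?_).symm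
  simp only [Equiv.subRight_apply, map_mul, Complex.conj_conj, add_sub_cancel,
    add_right_comm x u]
  ring

lemma sum_kernelCorr_mul_conj (t : G → ℂ) :
    ∑ q : G × G, kernelCorr K t q.1 q.2 * conj (kernelCorr K t q.1 q.2) =
      ∑ r : G × G × G, kernelBox K r.1 r.2.1 r.2.2 *
        (conj (t r.1) * t (r.1 + r.2.1) * t (r.1 + r.2.2) * conj (t (r.1 + r.2.1 + r.2.2))) := by
  simp only [Fintype.sum_prod_type]
  simp only [kernelCorr, sum_mul_conj_sum_eq_sum_shift]
  simp only [kernelBox, sum_mul]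
  conv_rhs => enter [2, s, 2, u]; rw [sum_comm]
  conv_rhs => enter [2, s]; rw [sum_comm]
  conv_rhs => rw [sum_comm]
  refine sum_congr rfl fun x _ => ?_
  conv_rhs => rw [sum_comm]
  refine sum_congr rfl fun u _ => sum_congr rfl fun s _ => sum_congr rfl fun v _ => ?_
  simp only [map_mul, Complex.conj_conj, add_right_comm s v u, add_sub_right_comm s v x]
  simp only [starRingEnd_apply]
  ring

lemma kernelBoxEnergy_nonneg : 0 ≤ kernelBoxEnergy K := by
  unfold kernelBoxEnergy
  positivity

variable {K}

lemma sq_norm_kernelConv_le (hK : ∀ x y, ‖K x y‖ ≤ 1) (a b : G → ℂ) (s : G) :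
    ‖kernelConv K a b s‖ ^ 2 ≤ (∑ x, ‖a x‖ ^ 2) * ∑ y, ‖b y‖ ^ 2 := by
  have hnorm : ‖kernelConv K a b s‖ ≤ ∑ x, ‖a x‖ * ‖b (s - x)‖ := by
    refine (norm_sum_le _ _).trans (sum_le_sum fun x _ => ?_)
    rw [norm_mul, norm_mul]
    exact mul_le_of_le_one_right (by positivity) (hK _ _)
  calc ‖kernelConv K a b s‖ ^ 2 ≤ (∑ x, ‖a x‖ * ‖b (s - x)‖) ^ 2 := by gcongr
    _ ≤ (∑ x, ‖a x‖ ^ 2) * ∑ x, ‖b (s - x)‖ ^ 2 := sum_mul_sq_le_sq_mul_sq _ _ _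
    _ = (∑ x, ‖a x‖ ^ 2) * ∑ y, ‖b y‖ ^ 2 :=
        congrArg _ (Equiv.sum_comp (Equiv.subLeft s) fun y => ‖b y‖ ^ 2)

lemma sum_sq_norm_mul_conj_shift (a : G → ℂ) :
    ∑ q : G × G, ‖a q.1 * conj (a (q.1 + q.2))‖ ^ 2 = (∑ x, ‖a x‖ ^ 2) ^ 2 := by
  have hshift (x : G) : ∑ u, ‖a (x + u)‖ ^ 2 = ∑ y, ‖a y‖ ^ 2 :=
    Equiv.sum_comp (Equiv.addLeft x) fun y => ‖a y‖ ^ 2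
  simp only [Fintype.sum_prod_type, norm_mul, Complex.norm_conj, mul_pow, ← mul_sum, hshift]
  rw [← sum_mul, sq]

theorem sum_sq_norm_kernelConv_pow_five_le (hK : ∀ x y, ‖K x y‖ ≤ 1) (a b : G → ℂ) :
    (∑ s, ‖kernelConv K a b s‖ ^ 2) ^ 5 ≤
      (∑ x, ‖a x‖ ^ 2) ^ 5 * (∑ y, ‖b y‖ ^ 2) ^ 5 * kernelBoxEnergy K := by
  set T := kernelConv K a b
  set σ := ∑ s, ‖T s‖ ^ 2
  set A := ∑ x, ‖a x‖ ^ 2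
  set B := ∑ y, ‖b y‖ ^ 2
  set ρ := ∑ y, ‖kernelConvDual K a T y‖ ^ 2
  set β := ∑ q : G × G, ‖kernelCorr K T q.1 q.2‖ ^ 2
  have hσ : 0 ≤ σ := by positivity
  have hρ : 0 ≤ ρ := by positivity
  have hβ : 0 ≤ β := by positivity
  have hE : 0 ≤ kernelBoxEnergy K := kernelBoxEnergy_nonneg K
  have h₁ : σ ^ 2 ≤ B * ρ := sq_le_of_ofReal_eq_sum_mul hσ b (kernelConvDual K a T) <| by
    rw [ofReal_sum_sq_norm, sum_kernelConv_mul_conj]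
  have h₂ : ρ ^ 2 ≤ A ^ 2 * β := by
    have hcs := sq_le_of_ofReal_eq_sum_mul hρ (fun q : G × G => a q.1 * conj (a (q.1 + q.2)))
      (fun q => kernelCorr K T q.1 q.2) <| by
      rw [ofReal_sum_sq_norm, sum_kernelConvDual_mul_conj]
    rwa [sum_sq_norm_mul_conj_shift] at hcs
  have h₃ : β ^ 2 ≤ kernelBoxEnergy K * (A * B * σ ^ 3) := by
    have hcs := sq_le_of_ofReal_eq_sum_mul hβ (fun r : G × G × G => kernelBox K r.1 r.2.1 r.2.2)
      (fun r => conj (T r.1) * T (r.1 + r.2.1) * T (r.1 + r.2.2) *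
        conj (T (r.1 + r.2.1 + r.2.2))) <| by
      rw [ofReal_sum_sq_norm, sum_kernelCorr_mul_conj]
    simp only [norm_mul, Complex.norm_conj, mul_pow] at hcs
    rw [sum_box_eq_sum_sq_autocorr (fun s => ‖T s‖ ^ 2)] at hcs
    refine hcs.trans (mul_le_mul ?_ ?_ (by positivity) hE)
    · simp only [kernelBoxEnergy, Fintype.sum_prod_type, le_refl]
    · exact sum_sq_autocorr_le (fun s => by positivity) (sq_norm_kernelConv_le hK a b)
  have h₈ : σ ^ 8 ≤ (A ^ 5 * B ^ 5 * kernelBoxEnergy K) * σ ^ 3 :=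
    calc σ ^ 8 = (σ ^ 2) ^ 4 := by ring
      _ ≤ (B * ρ) ^ 4 := by gcongr
      _ = B ^ 4 * (ρ ^ 2) ^ 2 := by ring
      _ ≤ B ^ 4 * (A ^ 2 * β) ^ 2 := by gcongr
      _ = A ^ 4 * B ^ 4 * β ^ 2 := by ring
      _ ≤ A ^ 4 * B ^ 4 * (kernelBoxEnergy K * (A * B * σ ^ 3)) := by gcongr
      _ = (A ^ 5 * B ^ 5 * kernelBoxEnergy K) * σ ^ 3 := by ring
  rcases hσ.eq_or_lt with h0 | hpos
  · rw [← h0, zero_pow (by norm_num)]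
    positivity
  · exact le_of_mul_le_mul_right (by rw [← pow_add]; exact h₈) (pow_pos hpos 3)

end KernelConv

lemma sum_filter_ne_zero_eq_kernelConv {G : Type*} [AddCommGroup G] [Fintype G] [DecidableEq G]
    (K : G → G → ℂ) (a b : G → ℂ) (s : G) :
    ∑ n ∈ univ.filter (fun n : G => n ≠ 0), a (s - n) * b n * K (s - n) n =
      kernelConv K a (fun n => if n = 0 then 0 else b n) s := by
  rw [sum_filter, kernelConv]
  refine (Fintype.sum_equiv (Equiv.subLeft s) _ _ fun x => ?_).symm
  by_cases hx : s - x = 0 <;> simp [hx, sub_sub_cancel]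

lemma rpow_one_half_le_of_pow_five_le {σ x y E : ℝ} (hσ : 0 ≤ σ) (hx : 0 ≤ x) (hy : 0 ≤ y)
    (hE : 0 ≤ E) (h : σ ^ 5 ≤ (x ^ 2) ^ 5 * (y ^ 2) ^ 5 * E) :
    σ ^ (1 / 2 : ℝ) ≤ (E ^ (1 / 2 : ℝ)) ^ (1 / 5 : ℝ) * x * y := by
  have hpow {t : ℝ} (ht : 0 ≤ t) (r : ℝ) (n : ℕ) (hrn : r * n = 1) : (t ^ r) ^ n = t := by
    rw [← Real.rpow_mul_natCast ht, hrn, Real.rpow_one]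
  refine le_of_pow_le_pow_left₀ (n := 10) (by norm_num) (by positivity) ?_
  calc (σ ^ (1 / 2 : ℝ)) ^ 10 = σ ^ 5 := by
        rw [show 10 = 2 * 5 by rfl, pow_mul, hpow hσ _ _ (by norm_num)]
    _ ≤ (x ^ 2) ^ 5 * (y ^ 2) ^ 5 * E := h
    _ = ((E ^ (1 / 2 : ℝ)) ^ (1 / 5 : ℝ) * x * y) ^ 10 := by
        rw [← Real.rpow_mul hE, mul_pow, mul_pow, hpow hE _ _ (by norm_num)]
        ring

section Fourier

open scoped ZMod

lemma ep_eq_stdAddChar (p : ℕ) [NeZero p] (x : ZMod p) : ep p x = ZMod.stdAddChar x :=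
  (ZMod.toCircle_apply x).symm

lemma ft_eq_dft (p : ℕ) [NeZero p] (f : ZMod p → ℂ) (z : ZMod p) :
    ft p f z = (p : ℂ)⁻¹ * 𝓕 f z := by
  simp only [ft, ZMod.dft_apply, ep_eq_stdAddChar, smul_eq_mul, one_div]

lemma sum_sq_norm_dft {N : ℕ} [NeZero N] (Φ : ZMod N → ℂ) :
    ∑ k, ‖𝓕 Φ k‖ ^ 2 = N * ∑ j, ‖Φ j‖ ^ 2 := by
  have hconj (j : ZMod N) :
      conj (𝓕 (𝓕 Φ) (-j)) = ∑ k, ZMod.stdAddChar (-(j * k)) * conj (𝓕 Φ k) := by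
    rw [ZMod.dft_apply, map_sum]
    refine sum_congr rfl fun k _ => ?_
    rw [smul_eq_mul, map_mul, ← AddChar.map_neg_eq_conj, mul_neg, neg_neg, mul_comm k j]
  have h : ∑ k, 𝓕 Φ k * conj (𝓕 Φ k) = N * ∑ j, Φ j * conj (Φ j) := by
    calc ∑ k, 𝓕 Φ k * conj (𝓕 Φ k)
        = ∑ j, Φ j * conj (𝓕 (𝓕 Φ) (-j)) := by
          simp only [hconj, mul_sum]
          rw [sum_comm]
          refine sum_congr rfl fun k _ => ?_
          rw [ZMod.dft_apply, sum_mul]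
          exact sum_congr rfl fun j _ => by rw [smul_eq_mul]; ring
      _ = N * ∑ j, Φ j * conj (Φ j) := by
          simp only [ZMod.dft_dft, neg_neg, smul_eq_mul, map_mul, Complex.conj_natCast, mul_sum]
          exact sum_congr rfl fun j _ => by ring
  have h' : ((∑ k, ‖𝓕 Φ k‖ ^ 2 : ℝ) : ℂ) = ((N * ∑ j, ‖Φ j‖ ^ 2 : ℝ) : ℂ) := by
    rw [Complex.ofReal_mul, ofReal_sum_sq_norm, ofReal_sum_sq_norm, Complex.ofReal_natCast, h]
  exact_mod_cast h'

lemma sum_sq_norm_ft (p : ℕ) [NeZero p] (f : ZMod p → ℂ) :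
    ∑ z, ‖ft p f z‖ ^ 2 = nrm2 p f ^ 2 := by
  have hp : (0 : ℝ) < p := Nat.cast_pos.2 (NeZero.pos p)
  simp only [ft_eq_dft, norm_mul, mul_pow, ← mul_sum, sum_sq_norm_dft, nrm2, norm_inv,
    Complex.norm_natCast]
  rw [Real.sq_sqrt (by positivity)]
  field_simp

end Fourier

theorem stmt6 : ∃ c : ℝ, 0 < c ∧ ∀ (p : ℕ) [NeZero p], p.Prime →
    ∀ K : ZMod p → ZMod p → ℂ, (∀ x y, ‖K x y‖ ≤ 1) →
    ∀ f₁ f₂ : ZMod p → ℂ,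
    (∑ s : ZMod p, ‖(∑ n ∈ Finset.univ.filter (fun n : ZMod p => n ≠ 0),
        ft p f₁ (s - n) * ft p f₂ n * K (s - n) n)‖ ^ 2) ^ ((1 : ℝ) / 2) ≤
      c * bigOmega p K ^ ((1 : ℝ) / 5) * nrm2 p f₁ * nrm2 p f₂ := by
  refine ⟨1, one_pos, fun p _ _ K hK f₁ f₂ => ?_⟩
  set b : ZMod p → ℂ := fun n => if n = 0 then 0 else ft p f₂ n
  have hb : ∑ n, ‖b n‖ ^ 2 ≤ nrm2 p f₂ ^ 2 := by
    rw [← sum_sq_norm_ft]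
    exact sum_le_sum fun n _ => by by_cases hn : n = 0 <;> simp [b, hn]
  have key := sum_sq_norm_kernelConv_pow_five_le hK (ft p f₁) b
  rw [sum_sq_norm_ft] at key
  have hΩ : bigOmega p K = kernelBoxEnergy K ^ (1 / 2 : ℝ) := rfl
  simp_rw [sum_filter_ne_zero_eq_kernelConv, one_mul, hΩ]
  refine rpow_one_half_le_of_pow_five_le (by positivity) (Real.sqrt_nonneg _)
    (Real.sqrt_nonneg _) (kernelBoxEnergy_nonneg K) (key.trans ?_)
  exact mul_le_mul_of_nonneg_right (by gcongr) (kernelBoxEnergy_nonneg K)
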